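/- arXiv:1601.01779 — 2 statements merged into one kernel-verified Lean document; each statement's English description precedes it below -/
import Mathlib

section
/- Let k be an algebraically closed field and f = (f_1,...,f_m) ∈ k[t_1,...,t_n]^m almost surjective on k. Then for all p,q ∈ k[x_1,...,x_m], if p(f_1,...,f_m) divides q(f_1,...,f_m) in k[t_1,...,t_n], then p divides q in k[x_1,...,x_m]. -/
open MvPolynomial

/-- `p` vanishes at every point of `A`. -/
def VanishesOn {k : Type*} [CommSemiring k] {m : ℕ} (A : Set (Fin m → k))
    (p : MvPolynomial (Fin m) k) : Prop :=
  ∀ a ∈ A, eval a p = 0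

/-- The Zariski closure of `A ⊆ k^m` has dimension at most `d` (with `dim ∅ = -1`):
for every index set `S` with more than `d` elements, the vanishing ideal of `A`
contains a nonzero polynomial supported on the variables in `S`. -/
def ZClosureDimLE {k : Type*} [CommSemiring k] {m : ℕ} (A : Set (Fin m → k)) (d : ℤ) : Prop :=
  ∀ S : Finset (Fin m), d < (S.card : ℤ) →
    ∃ p : MvPolynomial (Fin m) k, p ≠ 0 ∧
      p ∈ MvPolynomial.supported k (↑S : Set (Fin m)) ∧ VanishesOn A p

/-- The range of the polynomial map `k^n → k^m` induced by `f`. -/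
def polyRange {k : Type*} [CommSemiring k] {m n : ℕ}
    (f : Fin m → MvPolynomial (Fin n) k) : Set (Fin m → k) :=
  Set.range fun a : Fin n → k => fun i => eval a (f i)

/-- `f` is almost surjective on `k`: the Zariski closure of the complement of the range
of the induced map `k^n → k^m` has dimension at most `m - 2`. -/
def AlmostSurj {k : Type*} [CommSemiring k] {m n : ℕ}
    (f : Fin m → MvPolynomial (Fin n) k) : Prop :=
  ZClosureDimLE (polyRange f)ᶜ ((m : ℤ) - 2)

/-- `g` is determined by `f`. -/
def Determined {k : Type*} [CommSemiring k] {m n : ℕ}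
    (f : Fin m → MvPolynomial (Fin n) k) (g : MvPolynomial (Fin n) k) : Prop :=
  ∀ a b : Fin n → k, (∀ i, eval a (f i) = eval b (f i)) → eval a g = eval b g

/-!
By unique factorisation it suffices to treat a prime divisor `r`, provided `p ↦ p(f)` is injective.
Pick a variable `x_i` occurring in `r`. Almost surjectivity yields a nonzero `g` not involving
`x_i` that vanishes off the range of `f`. Then `q g` vanishes on the zero set of `r`: on the
range because `r(f) ∣ q(f)`, off it because of `g`. By the Nullstellensatz `r ∣ q g`, and `r ∤ g`
since `g` does not involve `x_i`. The same `g`, taken with no restriction on its variables, gives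
`p g = 0` whenever `p(f) = 0`, hence injectivity.
-/

theorem dvd_of_map_dvd_map_of_prime {R S F : Type*} [CommMonoidWithZero R]
    [UniqueFactorizationMonoid R] [CommMonoidWithZero S] [IsCancelMulZero S] [FunLike F R S]
    [MonoidWithZeroHomClass F R S] {φ : F} (hφ : Function.Injective φ)
    (hprime : ∀ r q : R, Prime r → φ r ∣ φ q → r ∣ q) {p q : R} (h : φ p ∣ φ q) : p ∣ q := by
  induction p using UniqueFactorizationMonoid.induction_on_prime generalizing q with
  | h₁ =>
    rw [map_zero, zero_dvd_iff, ← map_zero φ] at h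
    rw [hφ h]
  | h₂ x hx => exact hx.dvd
  | h₃ a r _ hr ih =>
    obtain ⟨q', rfl⟩ := hprime r q hr (dvd_trans (by rw [map_mul]; exact dvd_mul_right _ _) h)
    have hφr : φ r ≠ 0 := fun h0 => hr.ne_zero (hφ (by rw [h0, map_zero]))
    rw [map_mul, map_mul, mul_dvd_mul_iff_left hφr] at h
    exact mul_dvd_mul_left r (ih h)

namespace MvPolynomial

variable {k σ : Type*}

lemma eval_aeval [CommSemiring k] {τ : Type*} (a : τ → k) (f : σ → MvPolynomial τ k)
    (p : MvPolynomial σ k) : eval a (aeval f p) = eval (fun i => eval a (f i)) p :=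
  comp_aeval_apply f (aeval a) p

lemma not_dvd_of_mem_vars_of_notMem_vars [CommSemiring k] [NoZeroDivisors k]
    {r g : MvPolynomial σ k} {i : σ} (hr : i ∈ r.vars) (hg0 : g ≠ 0) (hg : i ∉ g.vars) :
    ¬ r ∣ g := by
  rintro ⟨s, rfl⟩
  rw [mem_vars_iff_degreeOf_ne_zero] at hr hg
  rw [degreeOf_mul_eq (left_ne_zero_of_mul hg0) (right_ne_zero_of_mul hg0)] at hg
  omega

lemma _root_.Prime.vars_nonempty [Field k] {r : MvPolynomial σ k} (hr : Prime r) :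
    r.vars.Nonempty := by
  rw [Finset.nonempty_iff_ne_empty, Ne, vars_eq_empty_iff_eq_C]
  intro hC
  have hc : r.coeff 0 ≠ 0 := fun h0 => hr.ne_zero (by rw [hC, h0, C_0])
  exact hr.not_isUnit (hC ▸ (isUnit_iff_ne_zero.mpr hc).map C)

lemma _root_.Prime.dvd_of_forall_eval_eq_zero [Field k] [IsAlgClosed k] [Finite σ]
    {r s : MvPolynomial σ k} (hr : Prime r) (h : ∀ x : σ → k, eval x r = 0 → eval x s = 0) :
    r ∣ s := by
  have : (Ideal.span {r}).IsPrime := (Ideal.span_singleton_prime hr.ne_zero).mpr hr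
  rw [← Ideal.mem_span_singleton, ← IsPrime.vanishingIdeal_zeroLocus (K := k) (Ideal.span {r}),
    mem_vanishingIdeal_iff]
  intro x hx
  exact h x (hx r (Ideal.mem_span_singleton_self r))

end MvPolynomial

section AlmostSurj

variable {k : Type*} [Field k] {m n : ℕ} {f : Fin m → MvPolynomial (Fin n) k}

lemma eval_eq_zero_of_aeval_dvd {x : Fin m → k} (hx : x ∈ polyRange f)
    {r q : MvPolynomial (Fin m) k} (h : aeval f r ∣ aeval f q) (hr : eval x r = 0) :
    eval x q = 0 := by
  obtain ⟨a, rfl⟩ := hx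
  simpa only [eval_aeval, hr, zero_dvd_iff] using map_dvd (eval a) h

lemma AlmostSurj.aeval_injective [Infinite k] (h : AlmostSurj f) :
    Function.Injective (aeval (R := k) f) := by
  refine (injective_iff_map_eq_zero _).mpr fun p hp => ?_
  obtain ⟨g, hg0, -, hg⟩ := h Finset.univ (by simp)
  have hpg : p * g = 0 := MvPolynomial.funext fun x => by
    rw [map_mul, map_zero]
    by_cases hx : x ∈ polyRange f
    · rw [eval_eq_zero_of_aeval_dvd hx (r := 0) (hp ▸ dvd_zero _) (map_zero _), zero_mul]
    · rw [hg x hx, mul_zero]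
  exact (mul_eq_zero.mp hpg).resolve_right hg0

lemma AlmostSurj.prime_dvd_of_aeval_dvd [IsAlgClosed k] (h : AlmostSurj f)
    {r q : MvPolynomial (Fin m) k} (hr : Prime r) (hdvd : aeval f r ∣ aeval f q) : r ∣ q := by
  obtain ⟨i, hi⟩ := hr.vars_nonempty
  obtain ⟨g, hg0, hgS, hg⟩ := h (Finset.univ.erase i) (by
    simp only [Finset.card_erase_of_mem (Finset.mem_univ i), Finset.card_univ, Fintype.card_fin]
    omega)
  have hgi : i ∉ g.vars := fun hi' => by simpa using mem_supported.mp hgS hi'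
  have hqg : r ∣ q * g := hr.dvd_of_forall_eval_eq_zero fun x hx => by
    rw [map_mul]
    by_cases hxf : x ∈ polyRange f
    · rw [eval_eq_zero_of_aeval_dvd hxf hdvd hx, zero_mul]
    · rw [hg x hxf, mul_zero]
  exact (hr.dvd_or_dvd hqg).resolve_right (not_dvd_of_mem_vars_of_notMem_vars hi hg0 hgi)

end AlmostSurj

theorem stmt7 {k : Type*} [Field k] [IsAlgClosed k] {m n : ℕ}
    (f : Fin m → MvPolynomial (Fin n) k) (h : AlmostSurj f)
    (p q : MvPolynomial (Fin m) k) (hdvd : aeval f p ∣ aeval f q) :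
    p ∣ q :=
  dvd_of_map_dvd_map_of_prime h.aeval_injective (fun _ _ hr => h.prime_dvd_of_aeval_dvd hr) hdvd
end

section
/- Let k be an algebraically closed field of characteristic 0, let f = (f_1,...,f_m) ∈ k[t_1,...,t_n]^m induce a surjective map k^n → k^m, and let h : k^m → k be any function such that h ∘ f (i.e., a ↦ h(f_1(a),...,f_m(a))) is a polynomial function on k^n. Then h is a polynomial function, i.e., there exists p ∈ k[x_1,...,x_m] with h(b) = p(b) for all b ∈ k^m. -/
/-!
Because `h ∘ f = g`, the polynomial `g` takes equal values at points with equal `f`-values. By the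
Nullstellensatz on `k^n × k^n` this persists, up to nilpotents, for points with coordinates in any
`k`-algebra. For the points `t ⊗ 1` and `1 ⊗ t` of `L ⊗[E] L`, where `L = k(t)` and `E = k(f(t))`,
it makes `g ⊗ 1 - 1 ⊗ g` nilpotent, and this forces `g ∈ E`: in characteristic zero an element of
`L ∖ E` is moved by some `E`-embedding `σ` of `E⟮g⟯` into an algebraically closed field containing
`L`, and `σ ⊗ id` sends `g ⊗ 1 - 1 ⊗ g` (which already lives in `E⟮g⟯ ⊗[E] L`) to a nonzero field
element. So `g · Q(f) = P(f)` with `Q ≠ 0`. As `f` is onto, every prime factor of `Q` divides `P`,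
again by the Nullstellensatz; cancelling them gives `g = p(f)`, and then `h = p`.
-/

open MvPolynomial

open IntermediateField
open scoped TensorProduct

theorem IntermediateField.exists_algHom_adjoin_simple_ne {K L Ω : Type*} [Field K] [Field L]
    [Field Ω] [Algebra K L] [Algebra K Ω] [IsAlgClosed Ω] [PerfectField K] (j : L →ₐ[K] Ω)
    {x : L} (hx : x ∉ (algebraMap K L).range) :
    ∃ σ : K⟮x⟯ →ₐ[K] Ω, σ (AdjoinSimple.gen K x) ≠ j x := by
  by_cases hint : IsIntegral K x
  · have hcard : 1 < Nat.card (K⟮x⟯ →ₐ[K] Ω) := by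
      rw [card_algHom_adjoin_integral K hint
        (PerfectField.separable_of_irreducible (minpoly.irreducible hint)) (IsAlgClosed.splits _)]
      exact (minpoly.two_le_natDegree_iff hint).2 hx
    have : Finite (K⟮x⟯ →ₐ[K] Ω) := Nat.finite_of_card_ne_zero (by omega)
    obtain ⟨σ₁, σ₂, hne⟩ := (Finite.one_lt_card_iff_nontrivial.1 hcard).exists_pair_ne
    by_contra! h
    exact hne (adjoin_algHom_ext K fun y hy => by
      obtain rfl := Set.mem_singleton_iff.1 hy
      exact (h σ₁).trans (h σ₂).symm)
  · -- `K⟮x⟯ ≃ K(X)`, and `X ↦ j x + 1` embeds `K(X)` into `Ω`.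
    have htx : Transcendental K x := fun h => hint h.isIntegral
    have htr : Transcendental K (j x + 1) := fun halg => hint <|
      (isIntegral_algHom_iff j j.injective).1 (by simpa using halg.isIntegral.sub isIntegral_one)
    have hφ := nonZeroDivisors_le_comap_nonZeroDivisors_of_injective _
      (transcendental_iff_injective.1 htr)
    refine ⟨(RatFunc.liftAlgHom _ hφ).comp
      (RatFunc.algEquivOfTranscendental x htx).symm.toAlgHom, ?_⟩
    have hX := RatFunc.liftAlgHom_apply_div _ hφ Polynomial.X 1
    simp only [RatFunc.algebraMap_X, map_one, div_one, Polynomial.aeval_X] at hX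
    simp [hX]

theorem MvPolynomial.eval_aeval_s17 {R σ τ : Type*} [CommSemiring R] (f : σ → MvPolynomial τ R)
    (a : τ → R) (p : MvPolynomial σ R) :
    eval a (aeval f p) = eval (fun i => eval a (f i)) p :=
  comp_aeval_apply f (aeval a) p

theorem MvPolynomial.aeval_injective_of_surjective {R σ τ : Type*} [CommRing R] [IsDomain R]
    [Infinite R] {f : σ → MvPolynomial τ R}
    (hf : Function.Surjective fun a : τ → R => fun i => eval a (f i)) :
    Function.Injective (aeval (R := R) f) := by
  refine (injective_iff_map_eq_zero _).2 fun p hp => MvPolynomial.funext fun b => ?_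
  obtain ⟨a, rfl⟩ := hf b
  rw [← eval_aeval_s17, hp, map_zero, map_zero]

section IsAlgClosed

variable {k σ τ : Type*} [Field k] [IsAlgClosed k] [Finite σ]

theorem Prime.dvd_of_forall_eval_eq_zero_s17 {q p : MvPolynomial σ k}
    (hq : Prime q) (h : ∀ b, eval b q = 0 → eval b p = 0) : q ∣ p := by
  have hp : p ∈ vanishingIdeal k (zeroLocus k (Ideal.span {q})) :=
    mem_vanishingIdeal_iff.2 fun b hb => h b (hb q (Ideal.mem_span_singleton_self q))
  rwa [vanishingIdeal_zeroLocus_eq_radical,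
    ((Ideal.span_singleton_prime hq.ne_zero).2 hq).radical, Ideal.mem_span_singleton] at hp

theorem MvPolynomial.exists_eq_aeval_of_mul_aeval_eq {f : σ → MvPolynomial τ k}
    (hf : Function.Surjective fun a : τ → k => fun i => eval a (f i)) {g : MvPolynomial τ k}
    {P Q : MvPolynomial σ k} (hQ : Q ≠ 0) (hPQ : g * aeval f Q = aeval f P) :
    ∃ p : MvPolynomial σ k, g = aeval f p := by
  induction Q using UniqueFactorizationMonoid.induction_on_prime generalizing P with
  | h₁ => exact absurd rfl hQ
  | h₂ Q hQu =>
    obtain ⟨u, rfl⟩ := hQu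
    refine ⟨P * ↑u⁻¹, ?_⟩
    rw [map_mul, ← hPQ, mul_assoc, ← map_mul, Units.mul_inv, map_one, mul_one]
  | h₃ Q q hQ0 hq ih =>
    have hvan : ∀ b, eval b q = 0 → eval b P = 0 := fun b hb => by
      obtain ⟨a, rfl⟩ := hf b
      rw [← eval_aeval_s17, ← hPQ, map_mul, map_mul, map_mul, eval_aeval_s17, hb, zero_mul, mul_zero]
    obtain ⟨P', rfl⟩ := hq.dvd_of_forall_eval_eq_zero_s17 hvan
    have hq0 : aeval f q ≠ 0 :=
      (map_ne_zero_iff _ (aeval_injective_of_surjective hf)).2 hq.ne_zero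
    refine ih (P := P') hQ0 (mul_left_cancel₀ hq0 ?_)
    rw [map_mul, map_mul] at hPQ
    rw [← hPQ]
    ring

end IsAlgClosed

theorem MvPolynomial.exists_mul_aeval_eq_of_algebraMap_mem_adjoin {k R L ι : Type*} [Field k]
    [CommRing R] [Algebra k R] [Field L] [Algebra R L] [IsFractionRing R L]
    [Algebra k L] [IsScalarTower k R L] {x : R} {v : ι → R}
    (hx : algebraMap R L x ∈ adjoin k (Set.range (algebraMap R L ∘ v))) :
    ∃ P Q : MvPolynomial ι k, Q ≠ 0 ∧ x * aeval v Q = aeval v P := by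
  obtain ⟨r, s, hrs⟩ := (mem_adjoin_range_iff _ _ _).1 hx
  rw [aeval_algebraMap_apply, aeval_algebraMap_apply] at hrs
  by_cases hs : aeval v s = 0
  · rw [hs, map_zero, div_zero, (IsFractionRing.injective R L).eq_iff' (map_zero _)] at hrs
    exact ⟨0, 1, one_ne_zero, by simp [hrs]⟩
  · refine ⟨r, s, fun h => hs (by simp [h]), IsFractionRing.injective R L ?_⟩
    rw [map_mul, hrs, div_mul_cancel₀]
    exact (map_ne_zero_iff _ (IsFractionRing.injective R L)).2 hs

namespace Determined

variable {k : Type*} [Field k] {m n : ℕ} {f : Fin m → MvPolynomial (Fin n) k}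
  {g : MvPolynomial (Fin n) k}

theorem rename_sub_mem_radical [IsAlgClosed k] (hg : Determined f g) :
    rename Sum.inl g - rename Sum.inr g ∈
      (Ideal.span (Set.range fun i => rename Sum.inl (f i) - rename Sum.inr (f i))).radical := by
  rw [← vanishingIdeal_zeroLocus_eq_radical (K := k), mem_vanishingIdeal_iff]
  intro c hc
  have hf : ∀ i, eval (c ∘ Sum.inl) (f i) = eval (c ∘ Sum.inr) (f i) := fun i => by
    simpa [sub_eq_zero, eval_rename] using hc _ (Ideal.subset_span ⟨i, rfl⟩)
  simp [eval_rename, hg _ _ hf]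

theorem isNilpotent_aeval_sub [IsAlgClosed k] (hg : Determined f g) {A : Type*} [CommRing A]
    [Algebra k A] {x y : Fin n → A} (hxy : ∀ i, aeval x (f i) = aeval y (f i)) :
    IsNilpotent (aeval x g - aeval y g) := by
  obtain ⟨N, hN⟩ := hg.rename_sub_mem_radical
  have hker : Ideal.span (Set.range fun i => rename Sum.inl (f i) - rename Sum.inr (f i)) ≤
      RingHom.ker (aeval (Sum.elim x y)) :=
    Ideal.span_le.2 (by rintro _ ⟨i, rfl⟩; simp [aeval_rename, hxy])
  exact ⟨N, by simpa [aeval_rename] using hker hN⟩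

theorem aeval_mem [IsAlgClosed k] [CharZero k] (hg : Determined f g) {L : Type*} [Field L]
    [Algebra k L] (E : IntermediateField k L) (t : Fin n → L) (ht : ∀ i, aeval t (f i) ∈ E) :
    aeval t g ∈ E := by
  by_contra hγ
  set γ := aeval t g
  let j := IsScalarTower.toAlgHom E L (AlgebraicClosure L)
  obtain ⟨σ, hσ⟩ := exists_algHom_adjoin_simple_ne j (x := γ) (by simpa using hγ)
  have hL : IsNilpotent (γ ⊗ₜ[E] (1 : L) - 1 ⊗ₜ γ) := by
    have := hg.isNilpotent_aeval_sub (A := L ⊗[E] L)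
      (x := fun i => Algebra.TensorProduct.includeLeft (t i))
      (y := fun i => (Algebra.TensorProduct.includeRight.restrictScalars k) (t i)) fun i => by
        rw [← comp_aeval_apply, ← comp_aeval_apply]
        obtain ⟨e, he⟩ : ∃ e : E, algebraMap E L e = aeval t (f i) := ⟨⟨_, ht i⟩, rfl⟩
        rw [← he]
        exact Algebra.TensorProduct.tmul_one_eq_one_tmul e
    rwa [← comp_aeval_apply, ← comp_aeval_apply] at this
  have : Module.Flat E L := Module.Flat.of_free
  have hF : IsNilpotent (AdjoinSimple.gen E γ ⊗ₜ[E] (1 : L) - 1 ⊗ₜ γ) :=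
    (IsNilpotent.map_iff (f := Algebra.TensorProduct.map (E⟮γ⟯).val (AlgHom.id E L))
      (Module.Flat.rTensor_preserves_injective_linearMap _ Subtype.val_injective)).1 hL
  have hΩ := hF.map (Algebra.TensorProduct.productMap σ j)
  rw [map_sub, Algebra.TensorProduct.productMap_apply_tmul,
    Algebra.TensorProduct.productMap_apply_tmul, map_one, map_one, mul_one, one_mul] at hΩ
  exact hσ (sub_eq_zero.1 hΩ.eq_zero)

theorem algebraMap_mem_adjoin [IsAlgClosed k] [CharZero k] (hg : Determined f g) {L : Type*}
    [Field L] [Algebra k L] [Algebra (MvPolynomial (Fin n) k) L]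
    [IsScalarTower k (MvPolynomial (Fin n) k) L] :
    algebraMap _ L g ∈ adjoin k (Set.range (algebraMap _ L ∘ f)) := by
  have hX (p : MvPolynomial (Fin n) k) :
      aeval (algebraMap (MvPolynomial (Fin n) k) L ∘ X) p = algebraMap _ L p := by
    rw [aeval_algebraMap_apply, aeval_X_left_apply]
  rw [← hX]
  exact hg.aeval_mem _ _ fun i => hX (f i) ▸ subset_adjoin _ _ ⟨i, rfl⟩

end Determined

theorem stmt17 {k : Type*} [Field k] [IsAlgClosed k] [CharZero k] {m n : ℕ}
    (f : Fin m → MvPolynomial (Fin n) k)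
    (hsurj : Function.Surjective fun a : Fin n → k => fun i => eval a (f i))
    (h : (Fin m → k) → k) (g : MvPolynomial (Fin n) k)
    (hcomp : ∀ a : Fin n → k, h (fun i => eval a (f i)) = eval a g) :
    ∃ p : MvPolynomial (Fin m) k, ∀ b : Fin m → k, h b = eval b p := by
  have hg : Determined f g := fun a b hab => by rw [← hcomp, ← hcomp, funext hab]
  obtain ⟨P, Q, hQ, hPQ⟩ := exists_mul_aeval_eq_of_algebraMap_mem_adjoin
    (hg.algebraMap_mem_adjoin (L := FractionRing (MvPolynomial (Fin n) k)))
  obtain ⟨p, rfl⟩ := exists_eq_aeval_of_mul_aeval_eq hsurj hQ hPQ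
  refine ⟨p, fun b => ?_⟩
  obtain ⟨a, rfl⟩ := hsurj b
  rw [hcomp, eval_aeval_s17]
end
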